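/- Let R > 0 and φ > 0, let N and K be positive integers, let λ : Fin N → ℝ, and let μ : Fin (2K) → ℝ be a family enumerated as {+μ_l, −μ_l : l = 1,…,K} with each μ_l ≥ 0 and not all μ_l equal to zero. Set M_μ = max_i |μ_i| and σ_μ = sqrt( (2K)^{-1} ∑_i μ_i² ), and for each n define h_n(θ) = E_τ[ (1/2) log{ 1 + 2 cosh(2Rθ) e^{−2Rλ_n} e^{−2φ√R τ − 2R} + e^{−4Rλ_n} e^{−4φ√R τ − 4R} } ]. Then F = (2KN)^{-1} ∑_{n=1}^{N} ∑_{i=1}^{2K} E_τ[ log{ 1 + e^{−2R(λ_n + μ_i)} e^{−2φ√R τ − 2R} } ] satisfies F ≤ N^{-1} ∑_{n=1}^{N} { h_n(0) + (σ_μ / M_μ) ( h_n(M_μ) − h_n(0) ) }. -/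

import Mathlib

open MeasureTheory Real Set

/-- Expectation with respect to a standard Gaussian variable `τ`. -/
noncomputable def gaussExp (p : ℝ → ℝ) : ℝ :=
  ∫ τ : ℝ, (Real.sqrt (2 * Real.pi))⁻¹ * Real.exp (-τ ^ 2 / 2) * p τ
open MeasureTheory Real Set

noncomputable def gw (τ : ℝ) : ℝ := (Real.sqrt (2 * Real.pi))⁻¹ * Real.exp (-τ ^ 2 / 2)

noncomputable def J (a b s θ τ : ℝ) : ℝ :=
  (1 / 2) * Real.log (1 + 2 * Real.cosh (s * θ) * Real.exp (a * τ + b) +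
    Real.exp (a * τ + b) ^ 2)

lemma one_add_pos {c x : ℝ} (hc : 0 < c) : (0:ℝ) < 1 + c * Real.exp x := by positivity

lemma Jarg_pos (a b s θ τ : ℝ) :
    (0:ℝ) < 1 + 2 * Real.cosh (s * θ) * Real.exp (a * τ + b) + Real.exp (a * τ + b) ^ 2 := by
  have h1 : (1:ℝ) ≤ Real.cosh (s * θ) := Real.one_le_cosh _
  have h2 : (0:ℝ) < Real.exp (a * τ + b) := Real.exp_pos _
  nlinarith

lemma prod_identity (c x : ℝ) :
    (1 + c * Real.exp x) * (1 + c * Real.exp (-x)) = 1 + 2 * Real.cosh x * c + c ^ 2 := by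
  have h : Real.exp x * Real.exp (-x) = 1 := by rw [← Real.exp_add]; simp
  rw [Real.cosh_eq]
  ring_nf
  nlinarith [h]

lemma J_eq (a b s θ τ : ℝ) :
    J a b s θ τ = (1 / 2) * (Real.log (1 + Real.exp (a * τ + b) * Real.exp (s * θ)) +
      Real.log (1 + Real.exp (a * τ + b) * Real.exp (-(s * θ)))) := by
  have hc : (0:ℝ) < Real.exp (a * τ + b) := Real.exp_pos _
  rw [← Real.log_mul (one_add_pos hc).ne' (one_add_pos hc).ne', prod_identity]
  rfl

lemma J_nonneg (a b s θ τ : ℝ) : 0 ≤ J a b s θ τ := by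
  have h1 : (1:ℝ) ≤ Real.cosh (s * θ) := Real.one_le_cosh _
  have h2 : (0:ℝ) < Real.exp (a * τ + b) := Real.exp_pos _
  have : (0:ℝ) ≤ Real.log (1 + 2 * Real.cosh (s * θ) * Real.exp (a * τ + b) +
      Real.exp (a * τ + b) ^ 2) := Real.log_nonneg (by nlinarith)
  unfold J; linarith

lemma log_one_add_le {x : ℝ} (hx : 0 ≤ x) : Real.log (1 + x) ≤ x := by
  have := Real.log_le_sub_one_of_pos (by linarith : (0:ℝ) < 1 + x)
  linarith


lemma convexOn_log_one_add_exp {c : ℝ} (hc : 0 < c) :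
    ConvexOn ℝ Set.univ (fun x => Real.log (1 + c * Real.exp x)) := by
  have hpos : ∀ x : ℝ, 0 < 1 + c * Real.exp x := fun x => by positivity
  have h1 : ∀ x : ℝ, HasDerivAt (fun x => 1 + c * Real.exp x) (c * Real.exp x) x :=
    fun x => ((Real.hasDerivAt_exp x).const_mul c).const_add 1
  refine convexOn_of_hasDerivWithinAt2_nonneg convex_univ
    (f' := fun x => c * Real.exp x / (1 + c * Real.exp x))
    (f'' := fun x => c * Real.exp x / (1 + c * Real.exp x) ^ 2)
    ?_ ?_ ?_ ?_
  · exact ((continuous_const.add (continuous_const.mul Real.continuous_exp)).log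
      (fun x => (hpos x).ne')).continuousOn
  · intro x _
    exact (((h1 x).log (hpos x).ne')).hasDerivWithinAt
  · intro x _
    have hd : HasDerivAt (fun x => c * Real.exp x / (1 + c * Real.exp x))
        ((c * Real.exp x * (1 + c * Real.exp x) - c * Real.exp x * (c * Real.exp x)) /
          (1 + c * Real.exp x) ^ 2) x :=
      (((Real.hasDerivAt_exp x).const_mul c)).div (h1 x) (hpos x).ne'
    have : (c * Real.exp x * (1 + c * Real.exp x) - c * Real.exp x * (c * Real.exp x)) /
          (1 + c * Real.exp x) ^ 2 = c * Real.exp x / (1 + c * Real.exp x) ^ 2 := by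
      congr 1; ring
    rw [this] at hd
    exact hd.hasDerivWithinAt
  · intro x _
    positivity

lemma log_chord {c : ℝ} (hc : 0 < c) {t u : ℝ} (ht0 : 0 ≤ t) (ht1 : t ≤ 1) :
    Real.log (1 + c * Real.exp (t * u)) ≤
      (1 - t) * Real.log (1 + c) + t * Real.log (1 + c * Real.exp u) := by
  have := (convexOn_log_one_add_exp hc).2 (mem_univ (0:ℝ)) (mem_univ u)
    (by linarith : (0:ℝ) ≤ 1 - t) ht0 (by ring)
  simpa using this

lemma J_chord {θ M : ℝ} (a b s : ℝ) (h0 : 0 ≤ θ) (hM : θ ≤ M) (hMpos : 0 < M) (τ : ℝ) :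
    J a b s θ τ ≤ (1 - θ / M) * J a b s 0 τ + (θ / M) * J a b s M τ := by
  have hc : (0:ℝ) < Real.exp (a * τ + b) := Real.exp_pos _
  set c := Real.exp (a * τ + b) with hcdef
  have ht0 : 0 ≤ θ / M := div_nonneg h0 hMpos.le
  have ht1 : θ / M ≤ 1 := (div_le_one hMpos).2 hM
  have e1 : s * θ = (θ / M) * (s * M) := by field_simp
  have e2 : -(s * θ) = (θ / M) * (-(s * M)) := by field_simp
  have c1 : Real.log (1 + c * Real.exp (s * θ)) ≤
      (1 - θ / M) * Real.log (1 + c) + (θ / M) * Real.log (1 + c * Real.exp (s * M)) := by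
    rw [e1]; exact log_chord hc ht0 ht1
  have c2 : Real.log (1 + c * Real.exp (-(s * θ))) ≤
      (1 - θ / M) * Real.log (1 + c) + (θ / M) * Real.log (1 + c * Real.exp (-(s * M))) := by
    rw [e2]; exact log_chord hc ht0 ht1
  rw [J_eq, J_eq, J_eq]
  have hz : (1 : ℝ) + c * Real.exp (s * (0:ℝ)) = 1 + c := by simp
  have hz' : (1 : ℝ) + c * Real.exp (-(s * (0:ℝ))) = 1 + c := by simp
  rw [hz, hz']
  linarith

lemma J_mono {M : ℝ} (a b s : ℝ) (hM : 0 ≤ M) (τ : ℝ) :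
    J a b s 0 τ ≤ J a b s M τ := by
  have h2 : (0:ℝ) < Real.exp (a * τ + b) := Real.exp_pos _
  have h1 : (1:ℝ) ≤ Real.cosh (s * M) := Real.one_le_cosh _
  have harg : 1 + 2 * Real.cosh (s * 0) * Real.exp (a * τ + b) + Real.exp (a * τ + b) ^ 2 ≤
      1 + 2 * Real.cosh (s * M) * Real.exp (a * τ + b) + Real.exp (a * τ + b) ^ 2 := by
    have : Real.cosh (s * (0:ℝ)) = 1 := by simp
    rw [this]; nlinarith
  have := Real.log_le_log (Jarg_pos a b s 0 τ) harg
  unfold J; linarith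

lemma gw_nonneg (τ : ℝ) : 0 ≤ gw τ := by unfold gw; positivity

lemma gw_continuous : Continuous gw := by
  unfold gw
  exact continuous_const.mul (Real.continuous_exp.comp (by continuity))

lemma integrable_gw_exp (a b : ℝ) : Integrable (fun τ => gw τ * Real.exp (a * τ + b)) := by
  have h0 : Integrable (fun x : ℝ => Real.exp (-(1/2) * x ^ 2)) :=
    integrable_exp_neg_mul_sq (by norm_num)
  have h1 : Integrable (fun x : ℝ => Real.exp (-(1/2) * (x - a) ^ 2)) := h0.comp_sub_right a
  have h2 : Integrable (fun x : ℝ =>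
      ((Real.sqrt (2 * Real.pi))⁻¹ * Real.exp (a ^ 2 / 2 + b)) *
        Real.exp (-(1/2) * (x - a) ^ 2)) := h1.const_mul _
  refine h2.congr ?_
  filter_upwards with τ
  unfold gw
  rw [mul_assoc, mul_assoc, ← Real.exp_add, ← Real.exp_add]
  congr 2
  ring

lemma integrable_gw_mul {f : ℝ → ℝ} (hf : Continuous f) (hnn : ∀ τ, 0 ≤ f τ)
    (C₁ a₁ b₁ C₂ a₂ b₂ : ℝ) (hC₁ : 0 ≤ C₁) (hC₂ : 0 ≤ C₂)
    (hbd : ∀ τ, f τ ≤ C₁ * Real.exp (a₁ * τ + b₁) + C₂ * Real.exp (a₂ * τ + b₂)) :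
    Integrable (fun τ => gw τ * f τ) := by
  have hg : Integrable (fun τ => C₁ * (gw τ * Real.exp (a₁ * τ + b₁)) +
      C₂ * (gw τ * Real.exp (a₂ * τ + b₂))) :=
    ((integrable_gw_exp a₁ b₁).const_mul C₁).add ((integrable_gw_exp a₂ b₂).const_mul C₂)
  refine hg.mono' ((gw_continuous.mul hf).aestronglyMeasurable) ?_
  filter_upwards with τ
  have h1 : ‖gw τ * f τ‖ = gw τ * f τ := by
    rw [Real.norm_eq_abs, abs_of_nonneg (mul_nonneg (gw_nonneg τ) (hnn τ))]
  rw [h1]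
  calc gw τ * f τ ≤ gw τ * (C₁ * Real.exp (a₁ * τ + b₁) + C₂ * Real.exp (a₂ * τ + b₂)) :=
        mul_le_mul_of_nonneg_left (hbd τ) (gw_nonneg τ)
    _ = C₁ * (gw τ * Real.exp (a₁ * τ + b₁)) + C₂ * (gw τ * Real.exp (a₂ * τ + b₂)) := by ring

lemma continuous_Jτ (a b s θ : ℝ) : Continuous (fun τ => J a b s θ τ) := by
  unfold J
  have hc : Continuous (fun τ : ℝ =>
      1 + 2 * Real.cosh (s * θ) * Real.exp (a * τ + b) + Real.exp (a * τ + b) ^ 2) := by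
    continuity
  exact continuous_const.mul (hc.log (fun τ => (Jarg_pos a b s θ τ).ne'))

lemma integrable_gw_J (a b s θ : ℝ) : Integrable (fun τ => gw τ * J a b s θ τ) := by
  refine integrable_gw_mul (continuous_Jτ a b s θ) (fun τ => J_nonneg a b s θ τ)
    (Real.cosh (s * θ)) a b (1/2) (2*a) (2*b) (by positivity) (by norm_num) ?_
  intro τ
  have hX : (0:ℝ) ≤ 2 * Real.cosh (s * θ) * Real.exp (a * τ + b) + Real.exp (a * τ + b) ^ 2 := by
    have := Real.one_le_cosh (s * θ); nlinarith [Real.exp_pos (a * τ + b)]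
  have hlog := log_one_add_le hX
  have hsq : Real.exp (a * τ + b) ^ 2 = Real.exp (2 * a * τ + 2 * b) := by
    rw [sq, ← Real.exp_add]; congr 1; ring
  unfold J
  rw [← add_assoc] at hlog
  nlinarith [hlog, hsq]

lemma continuous_logτ (a b d : ℝ) :
    Continuous (fun τ => Real.log (1 + Real.exp (a * τ + b) * Real.exp d)) := by
  have hc : Continuous (fun τ : ℝ => 1 + Real.exp (a * τ + b) * Real.exp d) := by continuity
  have hne : ∀ τ : ℝ, 1 + Real.exp (a * τ + b) * Real.exp d ≠ 0 := fun τ => by positivity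
  exact hc.log hne

lemma integrable_gw_log (a b d : ℝ) :
    Integrable (fun τ => gw τ * Real.log (1 + Real.exp (a * τ + b) * Real.exp d)) := by
  have hnn : ∀ τ : ℝ, 0 ≤ Real.log (1 + Real.exp (a * τ + b) * Real.exp d) := by
    intro τ
    have h1 : (0:ℝ) < Real.exp (a * τ + b) * Real.exp d :=
      mul_pos (Real.exp_pos _) (Real.exp_pos _)
    exact Real.log_nonneg (by linarith)
  refine integrable_gw_mul (continuous_logτ a b d) hnn
    (Real.exp d) a b 0 0 0 (Real.exp_pos d).le le_rfl ?_
  intro τ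
  have h1 : (0:ℝ) < Real.exp (a * τ + b) * Real.exp d :=
    mul_pos (Real.exp_pos _) (Real.exp_pos _)
  have h2 := log_one_add_le h1.le
  have h3 : (0:ℝ) < Real.exp ((0:ℝ) * τ + 0) := Real.exp_pos _
  nlinarith

noncomputable def HJ (a b s θ : ℝ) : ℝ := ∫ τ : ℝ, gw τ * J a b s θ τ

lemma HJ_chord (a b s : ℝ) {θ M : ℝ} (h0 : 0 ≤ θ) (hM : θ ≤ M) (hMpos : 0 < M) :
    HJ a b s θ ≤ (1 - θ / M) * HJ a b s 0 + (θ / M) * HJ a b s M := by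
  have hint0 := integrable_gw_J a b s 0
  have hintM := integrable_gw_J a b s M
  have hrhs : Integrable (fun τ => (1 - θ / M) * (gw τ * J a b s 0 τ) +
      (θ / M) * (gw τ * J a b s M τ)) := (hint0.const_mul _).add (hintM.const_mul _)
  have hmono := integral_mono (integrable_gw_J a b s θ) hrhs (fun τ => ?_)
  · calc HJ a b s θ ≤ _ := hmono
      _ = (1 - θ / M) * HJ a b s 0 + (θ / M) * HJ a b s M := by
        rw [integral_add (hint0.const_mul _) (hintM.const_mul _),
          integral_const_mul, integral_const_mul]; rfl
  · have := J_chord a b s h0 hM hMpos τ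
    have hw := gw_nonneg τ
    nlinarith [mul_le_mul_of_nonneg_left this hw]

lemma HJ_mono (a b s : ℝ) {M : ℝ} (hM : 0 ≤ M) : HJ a b s 0 ≤ HJ a b s M := by
  refine integral_mono (integrable_gw_J a b s 0) (integrable_gw_J a b s M) (fun τ => ?_)
  exact mul_le_mul_of_nonneg_left (J_mono a b s hM τ) (gw_nonneg τ)

lemma HJ_pair (a b s θ : ℝ) :
    (∫ τ : ℝ, gw τ * Real.log (1 + Real.exp (a * τ + b) * Real.exp (s * θ))) +
    (∫ τ : ℝ, gw τ * Real.log (1 + Real.exp (a * τ + b) * Real.exp (-(s * θ)))) =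
      2 * HJ a b s θ := by
  rw [← integral_add (integrable_gw_log a b (s * θ)) (integrable_gw_log a b (-(s * θ)))]
  rw [show (2 : ℝ) * HJ a b s θ = ∫ τ : ℝ, 2 * (gw τ * J a b s θ τ) from
    (integral_const_mul 2 _).symm]
  refine integral_congr_ae (Filter.Eventually.of_forall fun τ => ?_)
  have hJ := J_eq a b s θ τ
  show gw τ * _ + gw τ * _ = 2 * (gw τ * J a b s θ τ)
  rw [hJ]; ring

lemma gaussExp_eq (p : ℝ → ℝ) : gaussExp p = ∫ τ : ℝ, gw τ * p τ := by
  unfold gaussExp gw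
  simp [mul_assoc]

/-- The cluster-based tightened upper bound `F_M^{u1}` of the paper: within each cluster
centered at `λ_n`, the chord of the convex increasing function `h_n` between `θ = 0` and
`θ = M_μ = |μ|_max`, evaluated at `θ = σ_μ`, upper-bounds the cluster average. -/
theorem F_le_FMu1
    (R φ : ℝ) (hR : 0 < R) (hφ : 0 < φ)
    (N K : ℕ) (hN : 0 < N) (hK : 0 < K)
    (lam : Fin N → ℝ) (μ : Fin (2 * K) → ℝ)
    (e : Fin K ⊕ Fin K ≃ Fin (2 * K)) (μp : Fin K → ℝ)
    (hpos : ∀ l, μ (e (Sum.inl l)) = μp l)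
    (hneg : ∀ l, μ (e (Sum.inr l)) = -μp l)
    (hμp0 : ∀ l, 0 ≤ μp l) (hμpne : ∃ l, μp l ≠ 0)
    (Mμ : ℝ) (hMμ : IsGreatest (Set.range fun i => |μ i|) Mμ)
    (σμ : ℝ) (hσμ : σμ = Real.sqrt (((2 * K : ℕ) : ℝ)⁻¹ * ∑ i, (μ i) ^ 2))
    (h : Fin N → ℝ → ℝ)
    (hh : ∀ n θ, h n θ = gaussExp (fun τ =>
      (1 / 2) * Real.log (1 + 2 * Real.cosh (2 * R * θ) * Real.exp (-2 * R * lam n) *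
        Real.exp (-2 * φ * Real.sqrt R * τ - 2 * R) +
        Real.exp (-4 * R * lam n) * Real.exp (-4 * φ * Real.sqrt R * τ - 4 * R))))
    (F : ℝ)
    (hF : F = ((2 * K * N : ℕ) : ℝ)⁻¹ * ∑ n, ∑ i, gaussExp (fun τ =>
      Real.log (1 + Real.exp (-2 * R * (lam n + μ i)) *
        Real.exp (-2 * φ * Real.sqrt R * τ - 2 * R)))) :
    F ≤ (N : ℝ)⁻¹ * ∑ n, (h n 0 + (σμ / Mμ) * (h n Mμ - h n 0)) := by
  have hKR : (0:ℝ) < (K:ℝ) := by exact_mod_cast hK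
  have hNR : (0:ℝ) < (N:ℝ) := by exact_mod_cast hN
  -- Mμ is positive and bounds each μp l
  have hMpos : 0 < Mμ := by
    obtain ⟨l0, hl0⟩ := hμpne
    have h1 : |μ (e (Sum.inl l0))| ≤ Mμ := hMμ.2 (Set.mem_range_self _)
    have h2 : 0 < |μ (e (Sum.inl l0))| := by
      rw [hpos l0]; exact abs_pos.2 hl0
    linarith
  have hμle : ∀ l, μp l ≤ Mμ := by
    intro l
    have h1 : |μ (e (Sum.inl l))| ≤ Mμ := hMμ.2 (Set.mem_range_self _)
    rw [hpos l] at h1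
    exact (le_abs_self _).trans h1
  -- abbreviations
  set A : ℝ := -(2 * φ * Real.sqrt R) with hA
  -- h equals HJ
  have key : ∀ (n : Fin N) (θ : ℝ),
      h n θ = HJ A (-(2 * R * lam n) - 2 * R) (2 * R) θ := by
    intro n θ
    rw [hh, gaussExp_eq]
    unfold HJ
    refine integral_congr_ae (Filter.Eventually.of_forall fun τ => ?_)
    simp only [J]
    have a1 : (-2 * R * lam n) + (-2 * φ * Real.sqrt R * τ - 2 * R)
        = A * τ + (-(2 * R * lam n) - 2 * R) := by rw [hA]; ring
    have e1 : 2 * Real.cosh (2 * R * θ) * Real.exp (-2 * R * lam n) *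
        Real.exp (-2 * φ * Real.sqrt R * τ - 2 * R)
        = 2 * Real.cosh (2 * R * θ) * Real.exp (A * τ + (-(2 * R * lam n) - 2 * R)) := by
      rw [mul_assoc, ← Real.exp_add, a1]
    have a2 : (-4 * R * lam n) + (-4 * φ * Real.sqrt R * τ - 4 * R)
        = (A * τ + (-(2 * R * lam n) - 2 * R)) + (A * τ + (-(2 * R * lam n) - 2 * R)) := by
      rw [hA]; ring
    have e2 : Real.exp (-4 * R * lam n) * Real.exp (-4 * φ * Real.sqrt R * τ - 4 * R)
        = Real.exp (A * τ + (-(2 * R * lam n) - 2 * R)) ^ 2 := by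
      rw [sq, ← Real.exp_add, ← Real.exp_add, a2]
    rw [e1, e2]
  -- Δ nonneg
  have hΔ : ∀ n : Fin N, 0 ≤ h n Mμ - h n 0 := by
    intro n
    rw [key n Mμ, key n 0]
    linarith [HJ_mono A (-(2 * R * lam n) - 2 * R) (2 * R) hMpos.le]
  -- Cauchy-Schwarz : ∑ μp ≤ K * σμ
  have hSsum : ∑ i, (μ i) ^ 2 = 2 * ∑ l, (μp l) ^ 2 := by
    rw [← Equiv.sum_comp e (fun i => (μ i) ^ 2), Fintype.sum_sum_type]
    simp only [hpos, hneg, neg_sq]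
    ring
  have hσ' : σμ = Real.sqrt ((K:ℝ)⁻¹ * ∑ l, (μp l) ^ 2) := by
    rw [hσμ, hSsum]
    congr 1
    push_cast
    field_simp
  have hsum2 : (0:ℝ) ≤ ∑ l, (μp l) ^ 2 := Finset.sum_nonneg fun l _ => sq_nonneg _
  have hSnn : (0:ℝ) ≤ ∑ l, μp l := Finset.sum_nonneg fun l _ => hμp0 l
  have hS_le : ∑ l, μp l ≤ (K:ℝ) * σμ := by
    have h1 : (∑ l, μp l) ^ 2 ≤ (K:ℝ) * ∑ l, (μp l) ^ 2 := by
      have := sq_sum_le_card_mul_sum_sq (s := (Finset.univ : Finset (Fin K))) (f := μp)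
      simpa using this
    have h2 : (K:ℝ) * σμ = Real.sqrt ((K:ℝ) * ∑ l, (μp l) ^ 2) := by
      rw [hσ', show (K:ℝ) * ∑ l, (μp l) ^ 2 = (K:ℝ)^2 * ((K:ℝ)⁻¹ * ∑ l, (μp l) ^ 2) by
        field_simp, Real.sqrt_mul (sq_nonneg _), Real.sqrt_sq hKR.le]
    rw [h2]
    exact (Real.le_sqrt hSnn (by positivity)).2 h1
  -- per-cluster chord bound
  have hchord : ∀ (n : Fin N) (l : Fin K),
      h n (μp l) ≤ h n 0 + (μp l / Mμ) * (h n Mμ - h n 0) := by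
    intro n l
    have := HJ_chord A (-(2 * R * lam n) - 2 * R) (2 * R) (hμp0 l) (hμle l) hMpos
    rw [← key n (μp l), ← key n 0, ← key n Mμ] at this
    nlinarith [this]
  -- pairing identity
  have hpair : ∀ (n : Fin N) (l : Fin K),
      gaussExp (fun τ => Real.log (1 + Real.exp (-2 * R * (lam n + μ (e (Sum.inl l)))) *
        Real.exp (-2 * φ * Real.sqrt R * τ - 2 * R))) +
      gaussExp (fun τ => Real.log (1 + Real.exp (-2 * R * (lam n + μ (e (Sum.inr l)))) *
        Real.exp (-2 * φ * Real.sqrt R * τ - 2 * R))) = 2 * h n (μp l) := by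
    intro n l
    have hInl : gaussExp (fun τ => Real.log (1 + Real.exp (-2 * R * (lam n + μ (e (Sum.inl l)))) *
        Real.exp (-2 * φ * Real.sqrt R * τ - 2 * R)))
        = ∫ τ : ℝ, gw τ * Real.log (1 + Real.exp (A * τ + (-(2 * R * lam n) - 2 * R)) *
            Real.exp (-(2 * R * μp l))) := by
      rw [gaussExp_eq]
      refine integral_congr_ae (Filter.Eventually.of_forall fun τ => ?_)
      have e3 : Real.exp (-2 * R * (lam n + μ (e (Sum.inl l)))) *
          Real.exp (-2 * φ * Real.sqrt R * τ - 2 * R)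
          = Real.exp (A * τ + (-(2 * R * lam n) - 2 * R)) * Real.exp (-(2 * R * μp l)) := by
        rw [hpos l, ← Real.exp_add, ← Real.exp_add,
          show -2 * R * (lam n + μp l) + (-2 * φ * Real.sqrt R * τ - 2 * R)
            = A * τ + (-(2 * R * lam n) - 2 * R) + -(2 * R * μp l) by rw [hA]; ring]
      dsimp only
      rw [e3]
    have hInr : gaussExp (fun τ => Real.log (1 + Real.exp (-2 * R * (lam n + μ (e (Sum.inr l)))) *
        Real.exp (-2 * φ * Real.sqrt R * τ - 2 * R)))
        = ∫ τ : ℝ, gw τ * Real.log (1 + Real.exp (A * τ + (-(2 * R * lam n) - 2 * R)) *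
            Real.exp (2 * R * μp l)) := by
      rw [gaussExp_eq]
      refine integral_congr_ae (Filter.Eventually.of_forall fun τ => ?_)
      have e3 : Real.exp (-2 * R * (lam n + μ (e (Sum.inr l)))) *
          Real.exp (-2 * φ * Real.sqrt R * τ - 2 * R)
          = Real.exp (A * τ + (-(2 * R * lam n) - 2 * R)) * Real.exp (2 * R * μp l) := by
        rw [hneg l, ← Real.exp_add, ← Real.exp_add,
          show -2 * R * (lam n + -μp l) + (-2 * φ * Real.sqrt R * τ - 2 * R)
            = A * τ + (-(2 * R * lam n) - 2 * R) + 2 * R * μp l by rw [hA]; ring]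
      dsimp only
      rw [e3]
    rw [hInl, hInr, key n (μp l)]
    linarith [HJ_pair A (-(2 * R * lam n) - 2 * R) (2 * R) (μp l)]
  -- per-n bound
  have hsum : ∀ n : Fin N,
      ∑ i, gaussExp (fun τ => Real.log (1 + Real.exp (-2 * R * (lam n + μ i)) *
        Real.exp (-2 * φ * Real.sqrt R * τ - 2 * R)))
      ≤ 2 * (K:ℝ) * (h n 0 + (σμ / Mμ) * (h n Mμ - h n 0)) := by
    intro n
    have hre : ∑ i, gaussExp (fun τ => Real.log (1 + Real.exp (-2 * R * (lam n + μ i)) *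
        Real.exp (-2 * φ * Real.sqrt R * τ - 2 * R))) = ∑ l, 2 * h n (μp l) := by
      rw [← Equiv.sum_comp e (fun i => gaussExp (fun τ =>
        Real.log (1 + Real.exp (-2 * R * (lam n + μ i)) *
          Real.exp (-2 * φ * Real.sqrt R * τ - 2 * R)))), Fintype.sum_sum_type,
        ← Finset.sum_add_distrib]
      exact Finset.sum_congr rfl fun l _ => hpair n l
    rw [hre]
    have step1 : ∑ l, 2 * h n (μp l) ≤
        ∑ l, (2 * h n 0 + (2 / Mμ) * (h n Mμ - h n 0) * μp l) := by
      refine Finset.sum_le_sum fun l _ => ?_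
      have := hchord n l
      have hd : (μp l / Mμ) * (h n Mμ - h n 0) = (2 / Mμ) * (h n Mμ - h n 0) * μp l / 2 := by
        field_simp
      nlinarith [this]
    have step2 : ∑ l, (2 * h n 0 + (2 / Mμ) * (h n Mμ - h n 0) * μp l)
        = (K:ℝ) * (2 * h n 0) + (2 / Mμ) * (h n Mμ - h n 0) * ∑ l, μp l := by
      rw [Finset.sum_add_distrib, Finset.sum_const, ← Finset.mul_sum]
      simp [mul_comm]
    have step3 : (2 / Mμ) * (h n Mμ - h n 0) * ∑ l, μp l
        ≤ (2 / Mμ) * (h n Mμ - h n 0) * ((K:ℝ) * σμ) := by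
      have hnn : 0 ≤ (2 / Mμ) * (h n Mμ - h n 0) := by
        have := hΔ n
        positivity
      exact mul_le_mul_of_nonneg_left hS_le hnn
    have final : (K:ℝ) * (2 * h n 0) + (2 / Mμ) * (h n Mμ - h n 0) * ((K:ℝ) * σμ)
        = 2 * (K:ℝ) * (h n 0 + (σμ / Mμ) * (h n Mμ - h n 0)) := by
      field_simp
    linarith
  -- assemble
  rw [hF]
  have hcast : ((2 * K * N : ℕ) : ℝ) = 2 * (K:ℝ) * (N:ℝ) := by push_cast; ring
  have hinv : (0:ℝ) ≤ ((2 * K * N : ℕ) : ℝ)⁻¹ := by positivity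
  calc ((2 * K * N : ℕ) : ℝ)⁻¹ * ∑ n, ∑ i, gaussExp (fun τ =>
        Real.log (1 + Real.exp (-2 * R * (lam n + μ i)) *
          Real.exp (-2 * φ * Real.sqrt R * τ - 2 * R)))
      ≤ ((2 * K * N : ℕ) : ℝ)⁻¹ * ∑ n, 2 * (K:ℝ) *
          (h n 0 + (σμ / Mμ) * (h n Mμ - h n 0)) := by
        refine mul_le_mul_of_nonneg_left (Finset.sum_le_sum fun n _ => hsum n) hinv
    _ = (N : ℝ)⁻¹ * ∑ n, (h n 0 + (σμ / Mμ) * (h n Mμ - h n 0)) := by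
        rw [← Finset.mul_sum, hcast, ← mul_assoc]
        congr 1
        field_simp
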